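/- arXiv:1812.07497 — 2 statements merged into one kernel-verified Lean document; each statement's English description precedes it below -/
import Mathlib

section
/- Let 0 < γ' ≤ γ < 1, let τ₁, τ₃ ∈ (1,2], and let η₁ be a real number with γ/τ₁ < η₁. Then for every integer n ≥ 1 and every real h > 0 with n^(−γ) ≤ h ≤ n^(−γ'), one has n^(η₁)·h^(1/τ₁) ≥ (n·h^(1/τ₃))^((η₁−γ/τ₁)/(1−γ'/τ₃)). -/
open Real

/-! Both bounds on `h` turn into powers of `n`: `h ≤ n^(-γ')` gives `n·h^(1/τ₃) ≤ n^(1-γ'/τ₃)`,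
and `n^(-γ) ≤ h` gives `n^(η₁-γ/τ₁) ≤ n^η₁·h^(1/τ₁)`. The exponent `(η₁-γ/τ₁)/(1-γ'/τ₃)` is
nonnegative and chosen exactly so that raising the first bound to it yields `n^(η₁-γ/τ₁)`. -/

namespace Real

lemma mul_rpow_le_rpow_one_sub {x h a p : ℝ} (hx : 0 < x) (hh : 0 ≤ h) (hub : h ≤ x ^ (-a))
    (hp : 0 ≤ p) : x * h ^ p ≤ x ^ (1 - a * p) :=
  calc x * h ^ p ≤ x * (x ^ (-a)) ^ p := by gcongr
    _ = x ^ (1 - a * p) := by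
      rw [← rpow_mul hx.le, sub_eq_add_neg, rpow_add hx, rpow_one, neg_mul]

lemma rpow_sub_mul_le_mul_rpow {x h b c p : ℝ} (hx : 0 < x) (hlb : x ^ (-b) ≤ h) (hp : 0 ≤ p) :
    x ^ (c - b * p) ≤ x ^ c * h ^ p :=
  calc x ^ (c - b * p) = x ^ c * (x ^ (-b)) ^ p := by
        rw [← rpow_mul hx.le, sub_eq_add_neg, rpow_add hx, neg_mul]
    _ ≤ x ^ c * h ^ p := by gcongr

end Real

theorem stmt_2_general (γ γ' τ₁ τ₃ η₁ : ℝ)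
    (hγ'γ : γ' ≤ γ) (hγ1 : γ < 1)
    (hτ₁l : 1 < τ₁) (hτ₃l : 1 < τ₃)
    (hη₁ : γ / τ₁ < η₁)
    (n : ℕ) (hn : 1 ≤ n) (h : ℝ) (hh : 0 < h)
    (hlb : (n : ℝ) ^ (-γ) ≤ h) (hub : h ≤ (n : ℝ) ^ (-γ')) :
    ((n : ℝ) * h ^ (1 / τ₃)) ^ ((η₁ - γ / τ₁) / (1 - γ' / τ₃)) ≤ (n : ℝ) ^ η₁ * h ^ (1 / τ₁) := by
  have hn0 : (0 : ℝ) < n := by exact_mod_cast hn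
  have hden : 0 < 1 - γ' / τ₃ := by
    rw [sub_pos, div_lt_one (by linarith)]
    linarith
  have hexp : 0 ≤ (η₁ - γ / τ₁) / (1 - γ' / τ₃) := div_nonneg (by linarith) hden.le
  have hk : (n : ℝ) * h ^ (1 / τ₃) ≤ (n : ℝ) ^ (1 - γ' / τ₃) := by
    simpa only [mul_one_div] using
      mul_rpow_le_rpow_one_sub hn0 hh.le hub (one_div_nonneg.mpr (by linarith))
  calc ((n : ℝ) * h ^ (1 / τ₃)) ^ ((η₁ - γ / τ₁) / (1 - γ' / τ₃))
      ≤ ((n : ℝ) ^ (1 - γ' / τ₃)) ^ ((η₁ - γ / τ₁) / (1 - γ' / τ₃)) := by gcongr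
    _ = (n : ℝ) ^ (η₁ - γ / τ₁) := by rw [← rpow_mul hn0.le, mul_div_cancel₀ _ hden.ne']
    _ ≤ (n : ℝ) ^ η₁ * h ^ (1 / τ₁) := by
      simpa only [mul_one_div] using
        rpow_sub_mul_le_mul_rpow hn0 hlb (one_div_nonneg.mpr (by linarith))

/-- Remark 5 of the paper: the reduced sample size `n^(η₁)·h^(1/τ₁)` is bounded below by
`(n·h^(1/τ₃))^((η₁−γ/τ₁)/(1−γ'/τ₃))` under `n^(−γ) ≤ h ≤ n^(−γ')`. -/
theorem stmt_2 (γ γ' τ₁ τ₃ η₁ : ℝ)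
    (hγ'0 : 0 < γ') (hγ'γ : γ' ≤ γ) (hγ1 : γ < 1)
    (hτ₁l : 1 < τ₁) (hτ₁u : τ₁ ≤ 2) (hτ₃l : 1 < τ₃) (hτ₃u : τ₃ ≤ 2)
    (hη₁ : γ / τ₁ < η₁)
    (n : ℕ) (hn : 1 ≤ n) (h : ℝ) (hh : 0 < h)
    (hlb : (n : ℝ) ^ (-γ) ≤ h) (hub : h ≤ (n : ℝ) ^ (-γ')) :
    ((n : ℝ) * h ^ (1 / τ₃)) ^ ((η₁ - γ / τ₁) / (1 - γ' / τ₃)) ≤ (n : ℝ) ^ η₁ * h ^ (1 / τ₁) :=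
  stmt_2_general γ γ' τ₁ τ₃ η₁ hγ'γ hγ1 hτ₁l hτ₃l hη₁ n hn h hh hlb hub
end

section
/- Let 0 < γ' ≤ γ < 1 with additionally γ' < 1, and let η₂ be a real number with γ < η₂. Then for every integer n ≥ 1 and every real h > 0 with n^(−γ) ≤ h ≤ n^(−γ'), one has n^(η₂)·h ≥ (n·h)^((η₂−γ)/(1−γ')). -/
open Real

namespace Real

theorem mul_le_rpow_one_sub_of_le_rpow_neg {x h b : ℝ} (hx : 0 < x) (hh : h ≤ x ^ (-b)) :
    x * h ≤ x ^ (1 - b) :=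
  calc x * h ≤ x * x ^ (-b) := mul_le_mul_of_nonneg_left hh hx.le
    _ = x ^ (1 - b) := by rw [sub_eq_add_neg, rpow_add hx, rpow_one]

theorem rpow_div_le_of_le_rpow {x y a c : ℝ} (hx : 0 ≤ x) (hy : 0 ≤ y) (hyx : y ≤ x ^ c)
    (ha : 0 ≤ a) (hc : 0 < c) : y ^ (a / c) ≤ x ^ a :=
  calc y ^ (a / c) ≤ (x ^ c) ^ (a / c) := rpow_le_rpow hy hyx (div_nonneg ha hc.le)
    _ = x ^ a := by rw [← rpow_mul hx, mul_div_cancel₀ a hc.ne']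

theorem rpow_sub_le_rpow_mul_of_rpow_neg_le {x h a b : ℝ} (hx : 0 < x)
    (hh : x ^ (-b) ≤ h) : x ^ (a - b) ≤ x ^ a * h :=
  calc x ^ (a - b) = x ^ a * x ^ (-b) := by rw [sub_eq_add_neg, rpow_add hx]
    _ ≤ x ^ a * h := mul_le_mul_of_nonneg_left hh (rpow_nonneg hx.le a)

end Real

theorem stmt_3_general (γ γ' η₂ : ℝ)
    (hγ'1 : γ' < 1)
    (hη₂ : γ < η₂)
    (n : ℕ) (hn : 1 ≤ n) (h : ℝ) (hh : 0 < h)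
    (hlb : (n : ℝ) ^ (-γ) ≤ h) (hub : h ≤ (n : ℝ) ^ (-γ')) :
    ((n : ℝ) * h) ^ ((η₂ - γ) / (1 - γ')) ≤ (n : ℝ) ^ η₂ * h := by
  have hn0 : (0 : ℝ) < n := by exact_mod_cast hn
  have horizon_le : (n : ℝ) * h ≤ (n : ℝ) ^ (1 - γ') :=
    mul_le_rpow_one_sub_of_le_rpow_neg hn0 hub
  calc ((n : ℝ) * h) ^ ((η₂ - γ) / (1 - γ'))
      ≤ (n : ℝ) ^ (η₂ - γ) :=
        rpow_div_le_of_le_rpow hn0.le (by positivity) horizon_le (by linarith) (by linarith)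
    _ ≤ (n : ℝ) ^ η₂ * h := rpow_sub_le_rpow_mul_of_rpow_neg_le hn0 hlb

/-- Remark 5 of the paper: the reduced horizon `n^(η₂)·h` is bounded below by
`(n·h)^((η₂−γ)/(1−γ'))` under `n^(−γ) ≤ h ≤ n^(−γ')`. -/
theorem stmt_3 (γ γ' η₂ : ℝ)
    (hγ'0 : 0 < γ') (hγ'γ : γ' ≤ γ) (hγ1 : γ < 1) (hγ'1 : γ' < 1)
    (hη₂ : γ < η₂)
    (n : ℕ) (hn : 1 ≤ n) (h : ℝ) (hh : 0 < h)
    (hlb : (n : ℝ) ^ (-γ) ≤ h) (hub : h ≤ (n : ℝ) ^ (-γ')) :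
    ((n : ℝ) * h) ^ ((η₂ - γ) / (1 - γ')) ≤ (n : ℝ) ^ η₂ * h :=
  stmt_3_general γ γ' η₂ hγ'1 hη₂ n hn h hh hlb hub
end
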